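/- arXiv:2004.10378 — 4 statements merged into one kernel-verified Lean document; each statement's English description precedes it below -/
import Mathlib

section
/- Let G be a group (with the discrete topology) and μ a finitely supported probability measure on G, i.e. μ = Σ_{a∈A} r_a δ_a for a finite set A ⊆ G with all r_a > 0 and Σ r_a = 1. If μ is idempotent under convolution, μ ∗ μ = μ, then A is a finite subgroup of G and μ is the uniform measure on A, i.e. r_a = 1/|A| for all a ∈ A. -/
/-!
Write `w x = μ {x}`. Idempotence says `w c = ∑ b ∈ A, r b * w (c * b⁻¹)`: `w` is a weighted mean
of its translates. At a point `c` where `w` is maximal, every term of this mean must be maximal as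
well, so `c * A⁻¹ ⊆ A` consists of maximizers; having `#A` elements, it is all of `A`. Hence `r` is
constant on `A`, every point of `A` is a maximizer, and `A * A⁻¹ ⊆ A` makes `A` a subgroup. The
constant is `1 / #A` because the weights sum to `1`.
-/

open MeasureTheory

/-- Convolution of two measures on a group: the pushforward of the product
measure under the multiplication map. -/
noncomputable def mconv {G : Type*} [Mul G] [MeasurableSpace G]
    (μ ν : Measure G) : Measure G :=
  Measure.map (fun p : G × G => p.1 * p.2) (μ.prod ν)

open Finset
open scoped ENNReal

lemma ENNReal.eq_of_le_of_sum_eq {ι : Type*} {s : Finset ι} {f g : ι → ℝ≥0∞}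
    (hle : ∀ i ∈ s, f i ≤ g i) (hsum : ∑ i ∈ s, f i = ∑ i ∈ s, g i)
    (htop : ∑ i ∈ s, g i ≠ ∞) {i : ι} (hi : i ∈ s) : f i = g i := by
  classical
  refine (hle i hi).eq_of_not_lt fun hlt => hsum.not_lt ?_
  have hrest : ∑ j ∈ s.erase i, f j ≤ ∑ j ∈ s.erase i, g j :=
    sum_le_sum fun j hj => hle j (mem_of_mem_erase hj)
  have hrest_top : ∑ j ∈ s.erase i, f j ≠ ∞ :=
    ne_top_of_le_ne_top (ne_top_of_le_ne_top htop (sum_le_sum_of_subset (erase_subset i s))) hrest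
  rw [← add_sum_erase s f hi, ← add_sum_erase s g hi]
  exact ENNReal.add_lt_add_of_lt_of_le hrest_top hlt hrest

section FiniteDirac

variable {α : Type*} [MeasurableSpace α]

instance sFinite_finsetSum {ι : Type*} (s : Finset ι) (m : ι → Measure α) [∀ i, SFinite (m i)] :
    SFinite (∑ i ∈ s, m i) := by
  rw [← Measure.sum_coe_finset]
  infer_instance

lemma aemeasurable_finsetSum_measure {β ι : Type*} [MeasurableSpace β] {f : α → β}
    {s : Finset ι} {m : ι → Measure α} (h : ∀ i ∈ s, AEMeasurable f (m i)) :
    AEMeasurable f (∑ i ∈ s, m i) := by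
  rw [← Measure.sum_coe_finset, aemeasurable_sum_measure_iff]
  exact fun i => h i i.2

variable [MeasurableSingletonClass α]

lemma aemeasurable_finsetSum_smul_dirac {β ι : Type*} [MeasurableSpace β] {f : α → β}
    (s : Finset ι) (c : ι → ℝ≥0∞) (x : ι → α) :
    AEMeasurable f (∑ i ∈ s, c i • Measure.dirac (x i)) :=
  aemeasurable_finsetSum_measure fun _ _ => aemeasurable_dirac.smul_measure _

lemma finsetSum_smul_dirac_apply (A : Finset α) (r : α → ℝ≥0∞) (s : Set α) :
    (∑ a ∈ A, r a • Measure.dirac a) s = ∑ a ∈ A, r a * s.indicator 1 a := by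
  simp [Measure.finsetSum_apply, Measure.dirac_apply]

lemma finsetSum_smul_dirac_apply_singleton (A : Finset α) (r : α → ℝ≥0∞) (x : α) :
    (∑ a ∈ A, r a • Measure.dirac a) {x} = (A : Set α).indicator r x := by
  classical
  simp [finsetSum_smul_dirac_apply, Set.indicator_apply]

end FiniteDirac

lemma finsetSum_smul_dirac_prod {α β : Type*} [MeasurableSpace α] [MeasurableSpace β]
    [MeasurableSingletonClass α] [MeasurableSingletonClass β]
    (A : Finset α) (B : Finset β) (r : α → ℝ≥0∞) (s : β → ℝ≥0∞) :
    (∑ a ∈ A, r a • Measure.dirac a).prod (∑ b ∈ B, s b • Measure.dirac b)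
      = ∑ a ∈ A, ∑ b ∈ B, (r a * s b) • Measure.dirac (a, b) := by
  ext t ht
  rw [Measure.prod_apply ht, lintegral_finsetSum_measure]
  simp only [Measure.finsetSum_apply, Measure.smul_apply, Measure.dirac_apply, smul_eq_mul,
    lintegral_smul_measure, lintegral_dirac, mul_sum, mul_assoc]
  rfl -- `(Prod.mk a ⁻¹' t).indicator 1 b` unfolds to `t.indicator 1 (a, b)`

lemma mconv_finsetSum_smul_dirac {G : Type*} [Mul G] [MeasurableSpace G]
    [MeasurableSingletonClass G] (A B : Finset G) (r s : G → ℝ≥0∞) :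
    mconv (∑ a ∈ A, r a • Measure.dirac a) (∑ b ∈ B, s b • Measure.dirac b)
      = ∑ a ∈ A, ∑ b ∈ B, (r a * s b) • Measure.dirac (a * b) := by
  -- multiplication need not be measurable on `G × G`, only a.e. measurable against finitely many atoms
  have hmul : AEMeasurable (fun p : G × G => p.1 * p.2)
      (∑ a ∈ A, ∑ b ∈ B, (r a * s b) • Measure.dirac (a, b)) :=
    aemeasurable_finsetSum_measure fun _ _ => aemeasurable_finsetSum_smul_dirac _ _ _
  rw [mconv, finsetSum_smul_dirac_prod, Measure.map_finset_sum hmul]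
  refine sum_congr rfl fun a _ => ?_
  rw [Measure.map_finset_sum (aemeasurable_finsetSum_smul_dirac _ _ _)]
  simp

lemma mconv_finsetSum_smul_dirac_apply_singleton {G : Type*} [Group G] [MeasurableSpace G]
    [MeasurableSingletonClass G] (A B : Finset G) (r s : G → ℝ≥0∞) (c : G) :
    mconv (∑ a ∈ A, r a • Measure.dirac a) (∑ b ∈ B, s b • Measure.dirac b) {c}
      = ∑ b ∈ B, s b * (A : Set G).indicator r (c * b⁻¹) := by
  classical
  simp only [mconv_finsetSum_smul_dirac, Measure.finsetSum_apply, Measure.smul_apply,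
    Measure.dirac_apply, smul_eq_mul]
  rw [sum_comm]
  refine sum_congr rfl fun b _ => ?_
  rw [← finsetSum_smul_dirac_apply_singleton, finsetSum_smul_dirac_apply, mul_sum]
  refine sum_congr rfl fun a _ => ?_
  simp only [Set.indicator_apply, Set.mem_singleton_iff, eq_mul_inv_iff_mul_eq, Pi.one_apply]
  ring

section Harmonic

variable {G : Type*} [Group G] {A : Finset G} {r : G → ℝ≥0∞}

lemma apply_mul_inv_eq_of_forall_le {w : G → ℝ≥0∞} {c : G} (hsum : ∑ b ∈ A, r b = 1)
    (hpos : ∀ b ∈ A, r b ≠ 0) (hc : w c = ∑ b ∈ A, r b * w (c * b⁻¹))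
    (hmax : ∀ x, w x ≤ w c) (htop : w c ≠ ∞) {b : G} (hb : b ∈ A) :
    w (c * b⁻¹) = w c := by
  have hr_le : r b ≤ 1 := hsum ▸ single_le_sum (fun _ _ => zero_le) hb
  have hmean : ∑ b ∈ A, r b * w c = w c := by rw [← sum_mul, hsum, one_mul]
  have h := ENNReal.eq_of_le_of_sum_eq (f := fun b => r b * w (c * b⁻¹))
    (g := fun b => r b * w c) (fun b _ => by gcongr; exact hmax _) (by rw [hmean, ← hc])
    (by rwa [hmean]) hb
  exact (ENNReal.mul_right_inj (hpos b hb) (ne_top_of_le_ne_top ENNReal.one_ne_top hr_le)).mp h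

variable (hsum : ∑ b ∈ A, r b = 1) (hpos : ∀ b ∈ A, r b ≠ 0)
  (hharm : ∀ c, (A : Set G).indicator r c = ∑ b ∈ A, r b * (A : Set G).indicator r (c * b⁻¹))
include hsum hpos hharm

lemma mul_inv_mem_of_forall_le {c : G} (hc : c ∈ A) (hmax : ∀ a ∈ A, r a ≤ r c)
    {b : G} (hb : b ∈ A) : c * b⁻¹ ∈ A ∧ r (c * b⁻¹) = r c := by
  classical
  have hwc : (A : Set G).indicator r c = r c := Set.indicator_of_mem (mem_coe.2 hc) r
  have hw_le : ∀ x, (A : Set G).indicator r x ≤ (A : Set G).indicator r c := by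
    intro x
    rw [hwc, Set.indicator_apply]
    split_ifs with hx
    exacts [hmax x hx, zero_le]
  have htop : r c ≠ ∞ :=
    ne_top_of_le_ne_top ENNReal.one_ne_top (hsum ▸ single_le_sum (fun _ _ => zero_le) hc)
  have h := apply_mul_inv_eq_of_forall_le hsum hpos (hharm c) hw_le (hwc ▸ htop) hb
  rw [hwc] at h
  have hmem : c * b⁻¹ ∈ A := mem_coe.1 (Set.mem_of_indicator_ne_zero (h ▸ hpos c hc))
  exact ⟨hmem, by rwa [Set.indicator_of_mem (mem_coe.2 hmem)] at h⟩

lemma eq_of_forall_le {c : G} (hc : c ∈ A) (hmax : ∀ a ∈ A, r a ≤ r c) {a : G} (ha : a ∈ A) :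
    r a = r c := by
  obtain ⟨b, hb, rfl⟩ := surjOn_of_injOn_of_card_le (fun b => c * b⁻¹)
    (fun b hb => (mul_inv_mem_of_forall_le hsum hpos hharm hc hmax hb).1)
    (fun x _ y _ h => inv_injective (mul_left_cancel h)) le_rfl ha
  exact (mul_inv_mem_of_forall_le hsum hpos hharm hc hmax hb).2

theorem exists_subgroup_coe_eq_and_eq_inv_card :
    ∃ H : Subgroup G, (H : Set G) = A ∧ ∀ a ∈ A, r a = (#A : ℝ≥0∞)⁻¹ := by
  have hA : A.Nonempty := nonempty_of_sum_ne_zero (hsum ▸ one_ne_zero)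
  obtain ⟨c, hc, hmax⟩ := A.exists_max_image r hA
  have hconst : ∀ a ∈ A, r a = r c := fun a ha => eq_of_forall_le hsum hpos hharm hc hmax ha
  have hmax_all : ∀ x ∈ A, ∀ a ∈ A, r a ≤ r x := fun x hx a ha =>
    ((hconst a ha).trans (hconst x hx).symm).le
  refine ⟨Subgroup.ofDiv A hA.to_set fun x hx y hy =>
    (mul_inv_mem_of_forall_le hsum hpos hharm hx (hmax_all x hx) hy).1, rfl, fun a ha => ?_⟩
  have hcard : r c * #A = 1 := by
    rw [← hsum, sum_congr rfl hconst, sum_const, nsmul_eq_mul, mul_comm]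
  rw [hconst a ha]
  exact ENNReal.eq_inv_of_mul_eq_one_left hcard

end Harmonic

theorem stmt4_general {G : Type*} [Group G] [MeasurableSpace G] [DiscreteMeasurableSpace G]
    (A : Finset G) (r : G → ENNReal)
    (hpos : ∀ a ∈ A, 0 < r a) (hsum : ∑ a ∈ A, r a = 1)
    (μ : Measure G) (hμ : μ = ∑ a ∈ A, r a • Measure.dirac a)
    (hidem : mconv μ μ = μ) :
    ∃ H : Subgroup G, (H : Set G) = (A : Set G) ∧
      ∀ a ∈ A, r a = (A.card : ENNReal)⁻¹ := by
  subst hμ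
  refine exists_subgroup_coe_eq_and_eq_inv_card hsum (fun a ha => (hpos a ha).ne') fun c => ?_
  rw [← finsetSum_smul_dirac_apply_singleton, ← mconv_finsetSum_smul_dirac_apply_singleton, hidem]

theorem stmt4 {G : Type*} [Group G] [MeasurableSpace G] [DiscreteMeasurableSpace G]
    (A : Finset G) (hA : A.Nonempty) (r : G → ENNReal)
    (hpos : ∀ a ∈ A, 0 < r a) (hsum : ∑ a ∈ A, r a = 1)
    (μ : Measure G) (hμ : μ = ∑ a ∈ A, r a • Measure.dirac a)
    (hidem : mconv μ μ = μ) :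
    ∃ H : Subgroup G, (H : Set G) = (A : Set G) ∧
      ∀ a ∈ A, r a = (A.card : ENNReal)⁻¹ :=
  stmt4_general A r hpos hsum μ hμ hidem
end

section
/- Let (Ω, μ) be a probability space, ε > 0, and (A_n)_{n∈ℕ} a sequence of measurable sets with μ(A_n) ≥ ε for all n. Then for every k ∈ ℕ there exist indices i₁ < i₂ < ⋯ < i_k such that μ(A_{i₁} ∩ ⋯ ∩ A_{i_k}) > 0; in particular the intersection A_{i₁} ∩ ⋯ ∩ A_{i_k} is nonempty. -/
/-!
The points lying in infinitely many `A n` form the set `limsup A`, which has measure at least `ε`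
by continuity from above. Each such point lies in some `k`-fold intersection `⋂ j, A (i j)` with
`i` strictly increasing, and there are only countably many such `i`, so one of these
intersections has positive measure.
-/

open MeasureTheory Filter Set

theorem Set.limsup_subset_iUnion_iInter_strictMono {α : Type*} (A : ℕ → Set α) (k : ℕ) :
    limsup A atTop ⊆ ⋃ i : {f : Fin k → ℕ // StrictMono f}, ⋂ j, A (i.1 j) := by
  intro ω hω
  have hinf : {n | ω ∈ A n}.Infinite := by
    rw [← Nat.frequently_atTop_iff_infinite]
    exact mem_limsup_iff_frequently_mem.1 hω
  exact mem_iUnion.2 ⟨⟨fun j => Nat.nth (· ∈ {n | ω ∈ A n}) j,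
    fun _ _ hab => Nat.nth_strictMono hinf hab⟩,
    mem_iInter.2 fun j => Nat.nth_mem_of_infinite hinf j⟩

namespace MeasureTheory

variable {Ω : Type*} [MeasurableSpace Ω] {μ : Measure Ω} {A : ℕ → Set Ω}

theorem le_measure_limsup_atTop [IsFiniteMeasure μ] {ε : ENNReal}
    (hA : ∀ n, MeasurableSet (A n)) (hbound : ∀ n, ε ≤ μ (A n)) :
    ε ≤ μ (limsup A atTop) := by
  rw [limsup_eq_iInf_iSup_of_nat]
  have hanti : Antitone fun N : ℕ => ⋃ n ≥ N, A n := fun N M hNM =>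
    biUnion_mono (fun n hn => le_trans hNM hn) fun _ _ => le_rfl
  have hmeas (N : ℕ) : NullMeasurableSet (⋃ n ≥ N, A n) μ :=
    (MeasurableSet.biUnion (to_countable _) fun n _ => hA n).nullMeasurableSet
  change ε ≤ μ (⋂ N, ⋃ n ≥ N, A n)
  rw [hanti.measure_iInter hmeas ⟨0, measure_ne_top μ _⟩]
  exact le_iInf fun N => (hbound N).trans (measure_mono (subset_iUnion₂_of_subset N le_rfl subset_rfl))

theorem exists_strictMono_measure_iInter_pos (hlimsup : μ (limsup A atTop) ≠ 0) (k : ℕ) :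
    ∃ i : Fin k → ℕ, StrictMono i ∧ 0 < μ (⋂ j, A (i j)) := by
  obtain ⟨i, hi⟩ := exists_measure_pos_of_not_measure_iUnion_null
    fun h => hlimsup (measure_mono_null (limsup_subset_iUnion_iInter_strictMono A k) h)
  exact ⟨i.1, i.2, hi⟩

end MeasureTheory

theorem stmt8 {Ω : Type*} [MeasurableSpace Ω] (μ : Measure Ω)
    [IsProbabilityMeasure μ] (ε : ENNReal) (hε : 0 < ε)
    (A : ℕ → Set Ω) (hA : ∀ n, MeasurableSet (A n))
    (hbound : ∀ n, ε ≤ μ (A n)) :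
    ∀ k : ℕ, ∃ i : Fin k → ℕ, StrictMono i ∧
      0 < μ (⋂ j, A (i j)) ∧ (⋂ j, A (i j)).Nonempty := by
  intro k
  have hlimsup : μ (limsup A atTop) ≠ 0 := (hε.trans_le (le_measure_limsup_atTop hA hbound)).ne'
  obtain ⟨i, hi, hpos⟩ := exists_strictMono_measure_iInter_pos hlimsup k
  exact ⟨i, hi, hpos, nonempty_of_measure_ne_zero hpos.ne'⟩
end

section
/- Let S be a nonempty compact Hausdorff semigroup in which the maps x ↦ x·a are continuous for every a ∈ S, and let I be a minimal left ideal of S. Then the set J(I) of idempotents of I is nonempty, and for every p ∈ I and every idempotent i ∈ J(I), one has p·i = p. -/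
/-- A left ideal of a semigroup (viewed as the whole type): a nonempty subset
closed under multiplication on the left by arbitrary elements. -/
def IsLeftIdeal {S : Type*} [Semigroup S] (I : Set S) : Prop :=
  I.Nonempty ∧ ∀ s : S, ∀ x ∈ I, s * x ∈ I

/-- A minimal left ideal: a left ideal containing no proper left ideal. -/
def IsMinimalLeftIdeal {S : Type*} [Semigroup S] (I : Set S) : Prop :=
  IsLeftIdeal I ∧ ∀ J : Set S, J ⊆ I → IsLeftIdeal J → J = I

/-!
For `a ∈ I` the set `S * a` is a left ideal inside `I`, so minimality forces `S * a = I`.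
Hence `I` is the image of the compact space `S` under the continuous map `x ↦ x * a`, so it is a
compact subsemigroup and contains an idempotent (Ellis–Numakura). Finally every `p ∈ I` can be
written `p = q * i`, so `p * i = q * i * i = q * i = p` for an idempotent `i ∈ I`.
-/

namespace IsMinimalLeftIdeal

variable {S : Type*} [Semigroup S] {I : Set S}

theorem range_mul_right_eq (hI : IsMinimalLeftIdeal I) {a : S} (ha : a ∈ I) :
    Set.range (· * a) = I := by
  refine hI.2 _ ?_ ⟨⟨a * a, a, rfl⟩, ?_⟩
  · rintro _ ⟨s, rfl⟩
    exact hI.1.2 s a ha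
  · rintro s _ ⟨t, rfl⟩
    exact ⟨s * t, mul_assoc s t a⟩

theorem mul_idempotent_eq (hI : IsMinimalLeftIdeal I) {p i : S} (hp : p ∈ I) (hi : i ∈ I)
    (hii : i * i = i) : p * i = p := by
  obtain ⟨q, rfl⟩ := (hI.range_mul_right_eq hi).symm ▸ hp
  rw [mul_assoc, hii]

theorem isCompact [TopologicalSpace S] [CompactSpace S]
    (hcont : ∀ a : S, Continuous (· * a)) (hI : IsMinimalLeftIdeal I) : IsCompact I := by
  obtain ⟨a, ha⟩ := hI.1.1
  rw [← hI.range_mul_right_eq ha]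
  exact isCompact_range (hcont a)

theorem exists_idempotent [TopologicalSpace S] [CompactSpace S] [T2Space S]
    (hcont : ∀ a : S, Continuous (· * a)) (hI : IsMinimalLeftIdeal I) : ∃ i ∈ I, i * i = i :=
  exists_idempotent_in_compact_subsemigroup hcont I hI.1.1 (hI.isCompact hcont)
    fun x _ y hy ↦ hI.1.2 x y hy

end IsMinimalLeftIdeal

theorem stmt11_general {S : Type*} [Semigroup S] [TopologicalSpace S]
    [CompactSpace S] [T2Space S]
    (hcont : ∀ a : S, Continuous fun x : S => x * a)
    (I : Set S) (hI : IsMinimalLeftIdeal I) :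
    (∃ i ∈ I, i * i = i) ∧
      ∀ p ∈ I, ∀ i ∈ I, i * i = i → p * i = p :=
  ⟨hI.exists_idempotent hcont, fun _ hp _ hi hii ↦ hI.mul_idempotent_eq hp hi hii⟩

theorem stmt11 {S : Type*} [Nonempty S] [Semigroup S] [TopologicalSpace S]
    [CompactSpace S] [T2Space S]
    (hcont : ∀ a : S, Continuous fun x : S => x * a)
    (I : Set S) (hI : IsMinimalLeftIdeal I) :
    (∃ i ∈ I, i * i = i) ∧
      ∀ p ∈ I, ∀ i ∈ I, i * i = i → p * i = p :=
  stmt11_general hcont I hI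
end

section
/- Let X be a compact Hausdorff totally disconnected space, D ⊆ X a subset, and μ an (outer and inner) regular Borel probability measure on X. Then μ lies in the weak* closure of the convex hull of the Dirac measures {δ_d : d ∈ D} (inside the space of Borel probability measures on X with the weak* topology) if and only if every clopen subset C ⊆ X with μ(C) > 0 satisfies C ∩ D ≠ ∅. -/
/-!
A measure in the weak* closure of the hull cannot charge a clopen set missing `D`, because the
indicator of a clopen set is a bounded continuous test function. Conversely, every discrete
quotient (finite clopen partition) of `X` gives a measure in the hull: move the mass of each piece
to a point of `D` in it, which exists whenever the piece has positive mass. Along ever finer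
partitions these measures converge to `μ`, since on a compact zero-dimensional space every
continuous function has small oscillation on the pieces of a fine enough clopen partition.
-/

open MeasureTheory Topology Filter Set
open scoped BoundedContinuousFunction

namespace DiscreteQuotient

variable {X : Type*} [TopologicalSpace X]

lemma proj_eq_proj_of_le {A B : DiscreteQuotient X} (h : A ≤ B) {x y : X}
    (hxy : A.proj x = A.proj y) : B.proj x = B.proj y := by
  rw [← ofLE_proj h x, ← ofLE_proj h y, hxy]

variable [T2Space X] [CompactSpace X] [TotallyDisconnectedSpace X]

theorem exists_subordinate_of_isOpen_cover {ι : Type*} {U : ι → Set X}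
    (hU : ∀ i, IsOpen (U i)) (hcover : ⋃ i, U i = univ) :
    ∃ Q : DiscreteQuotient X, ∀ x y, Q.proj x = Q.proj y → ∃ i, x ∈ U i ∧ y ∈ U i := by
  have hclopen : ∀ x, ∃ V, IsClopen V ∧ x ∈ V ∧ ∃ i, V ⊆ U i := fun x => by
    obtain ⟨i, hi⟩ := mem_iUnion.1 (hcover ▸ mem_univ x)
    obtain ⟨V, hV, hxV, hVU⟩ := compact_exists_isClopen_in_isOpen (hU i) hi
    exact ⟨V, hV, hxV, i, hVU⟩
  choose V hV hxV i hVU using hclopen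
  obtain ⟨t, ht⟩ := isCompact_univ.elim_finite_subcover V (fun x => (hV x).isOpen)
    fun x _ => mem_iUnion.2 ⟨x, hxV x⟩
  refine ⟨t.inf fun x => ofIsClopen (hV x), fun y z hyz => ?_⟩
  obtain ⟨x, hxt, hyx⟩ := mem_iUnion₂.1 (ht (mem_univ y))
  have hzx : z ∈ V x :=
    (Quotient.exact' (proj_eq_proj_of_le (Finset.inf_le hxt) hyz)).1 hyx
  exact ⟨i x, hVU x hyx, hVU x hzx⟩

theorem exists_forall_proj_eq_dist_lt {Y : Type*} [PseudoMetricSpace Y] {f : X → Y}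
    (hf : Continuous f) {ε : ℝ} (hε : 0 < ε) :
    ∃ Q : DiscreteQuotient X, ∀ x y, Q.proj x = Q.proj y → dist (f x) (f y) < ε := by
  obtain ⟨Q, hQ⟩ := exists_subordinate_of_isOpen_cover
    (U := fun x => f ⁻¹' Metric.ball (f x) (ε / 2)) (fun x => Metric.isOpen_ball.preimage hf)
    (iUnion_eq_univ_iff.2 fun x => ⟨x, Metric.mem_ball_self (half_pos hε)⟩)
  refine ⟨Q, fun x y hxy => ?_⟩
  obtain ⟨z, hx, hy⟩ := hQ x y hxy
  calc dist (f x) (f y) ≤ dist (f x) (f z) + dist (f y) (f z) := dist_triangle_right _ _ _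
    _ < ε / 2 + ε / 2 := add_lt_add hx hy
    _ = ε := add_halves ε

end DiscreteQuotient

theorem MeasureTheory.Measure.map_comp_eq_sum_smul_dirac {Ω ι Y : Type*} [MeasurableSpace Ω]
    [MeasurableSpace ι] [MeasurableSingletonClass ι] [Fintype ι] [MeasurableSpace Y]
    (μ : Measure Ω) {π : Ω → ι} (hπ : Measurable π) (d : ι → Y) :
    μ.map (d ∘ π) = ∑ k, μ (π ⁻¹' {k}) • Measure.dirac (d k) := by
  have hd := measurable_of_countable d
  rw [← Measure.map_map hd hπ, Measure.map_eq_sum μ π hπ]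
  simp only [Measure.sum_fintype, Measure.map_finset_sum hd.aemeasurable, Measure.map_smul,
    Measure.map_dirac' hd]

theorem dist_integral_map_le {X : Type*} [TopologicalSpace X] [MeasurableSpace X]
    [OpensMeasurableSpace X] (μ : Measure X) [IsProbabilityMeasure μ] {g : X → X}
    (hg : Measurable g) (f : X →ᵇ ℝ) {ε : ℝ} (h : ∀ᵐ x ∂μ, dist (f (g x)) (f x) ≤ ε) :
    dist (∫ x, f x ∂μ.map g) (∫ x, f x ∂μ) ≤ ε := by
  have hfg : Integrable (fun x => f (g x)) μ := (f.integrable _).comp_measurable hg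
  rw [integral_map hg.aemeasurable f.continuous.aestronglyMeasurable, dist_eq_norm,
    ← integral_sub hfg (f.integrable μ)]
  simpa using norm_integral_le_of_norm_le_const (f := fun x => f (g x) - f x)
    (h.mono fun x hx => by rwa [← dist_eq_norm])

section DiracConvexHull

variable {X : Type*} [MeasurableSpace X]

def diracConvexHull (D : Set X) : Set (ProbabilityMeasure X) :=
  {ν | ∃ (n : ℕ) (d : Fin n → X) (r : Fin n → ENNReal),
    (∀ j, d j ∈ D) ∧ (∑ j, r j = 1) ∧ (ν : Measure X) = ∑ j, r j • Measure.dirac (d j)}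

variable {D : Set X}

lemma measure_eq_zero_of_mem_diracConvexHull {ν : ProbabilityMeasure X}
    (hν : ν ∈ diracConvexHull D) {C : Set X} (hC : MeasurableSet C) (hCD : C ∩ D = ∅) :
    (ν : Measure X) C = 0 := by
  obtain ⟨n, d, r, hdD, -, hν⟩ := hν
  have hdC : ∀ j, d j ∉ C := fun j hj => hCD.subset ⟨hj, hdD j⟩
  simp [hν, Measure.finsetSum_apply, Measure.dirac_apply' _ hC, hdC]

lemma map_mem_diracConvexHull (μ : ProbabilityMeasure X) {n : ℕ} {π : X → Fin n}
    (hπ : Measurable π) {d : Fin n → X} (hdD : ∀ k, d k ∈ D) :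
    μ.map ((measurable_of_countable d).comp hπ).aemeasurable ∈ diracConvexHull D := by
  have hmap := (μ : Measure X).map_comp_eq_sum_smul_dirac hπ d
  refine ⟨n, d, fun k => (μ : Measure X) (π ⁻¹' {k}), hdD, ?_, hmap⟩
  have huniv := congrArg (· univ) hmap
  simpa [Measure.map_apply ((measurable_of_countable d).comp hπ) MeasurableSet.univ] using huniv.symm

variable [TopologicalSpace X] [OpensMeasurableSpace X]

theorem measure_eq_zero_of_mem_closure_diracConvexHull {μ : ProbabilityMeasure X}
    (hμ : μ ∈ closure (diracConvexHull D)) {C : Set X} (hC : IsClopen C) (hCD : C ∩ D = ∅) :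
    (μ : Measure X) C = 0 := by
  have hint : ∀ ν : ProbabilityMeasure X,
      ∫ x, BoundedContinuousFunction.indicator C hC x ∂ν = (ν : Measure X).real C :=
    fun ν => integral_indicator_one hC.isOpen.measurableSet
  have hclosed : IsClosed {ν : ProbabilityMeasure X | (ν : Measure X).real C = 0} := by
    simp_rw [← hint]
    exact isClosed_eq (ProbabilityMeasure.continuous_integral_boundedContinuousFunction _)
      continuous_const
  have hsub : diracConvexHull D ⊆ {ν : ProbabilityMeasure X | (ν : Measure X).real C = 0} :=
    fun ν hν => by
      simp [measureReal_def, measure_eq_zero_of_mem_diracConvexHull hν hC.isOpen.measurableSet hCD]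
  simpa using closure_minimal hsub hclosed hμ


variable [CompactSpace X]

theorem exists_mem_diracConvexHull_dist_integral_le {μ : ProbabilityMeasure X}
    (hD : ∀ C : Set X, IsClopen C → 0 < (μ : Measure X) C → (C ∩ D).Nonempty)
    (Q : DiscreteQuotient X) :
    ∃ ν ∈ diracConvexHull D, ∀ (f : X →ᵇ ℝ) (ε : ℝ),
      (∀ x y, Q.proj x = Q.proj y → dist (f x) (f y) ≤ ε) →
        dist (∫ x, f x ∂ν) (∫ x, f x ∂μ) ≤ ε := by
  obtain ⟨n, ⟨e⟩⟩ := Finite.exists_equiv_fin Q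
  set π : X → Fin n := e ∘ Q.proj
  have hπ_fiber : ∀ k, IsClopen (π ⁻¹' {k}) := fun k => Q.isClopen_preimage (e ⁻¹' {k})
  have hπ : Measurable π := measurable_to_countable' fun k => (hπ_fiber k).isOpen.measurableSet
  have hsection : ∀ k, ∃ x ∈ D, (μ : Measure X) (π ⁻¹' {k}) ≠ 0 → π x = k := by
    intro k
    by_cases hk : (μ : Measure X) (π ⁻¹' {k}) = 0
    · obtain ⟨x, -, hx⟩ := hD univ isClopen_univ (by simp)
      exact ⟨x, hx, fun h => absurd hk h⟩
    · obtain ⟨x, hxk, hxD⟩ := hD _ (hπ_fiber k) (pos_iff_ne_zero.2 hk)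
      exact ⟨x, hxD, fun _ => hxk⟩
  choose d hdD hdπ using hsection
  -- `ν` is the pushforward of `μ` under `d ∘ π`, which moves each fibre of `π` to a point of `D`.
  refine ⟨_, map_mem_diracConvexHull μ hπ hdD, fun f ε hf =>
    dist_integral_map_le _ ((measurable_of_countable d).comp hπ) f ?_⟩
  have hae : ∀ᵐ k ∂(μ : Measure X).map π, π (d k) = k := ae_iff_of_countable.2 fun k hk =>
    hdπ k (by rwa [Measure.map_apply hπ (measurableSet_singleton k)] at hk)
  filter_upwards [ae_of_ae_map hπ.aemeasurable hae] with x hx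
  exact hf _ _ (e.injective hx)

variable [T2Space X] [TotallyDisconnectedSpace X]

theorem mem_closure_diracConvexHull {μ : ProbabilityMeasure X}
    (hD : ∀ C : Set X, IsClopen C → 0 < (μ : Measure X) C → (C ∩ D).Nonempty) :
    μ ∈ closure (diracConvexHull D) := by
  choose ν hνD hν using exists_mem_diracConvexHull_dist_integral_le hD
  refine mem_closure_of_tendsto (b := atBot) ?_ (Eventually.of_forall hνD)
  refine ProbabilityMeasure.tendsto_iff_forall_integral_tendsto.2 fun f => ?_
  refine Metric.tendsto_nhds.2 fun ε hε => ?_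
  obtain ⟨Q₀, hQ₀⟩ := DiscreteQuotient.exists_forall_proj_eq_dist_lt f.continuous (half_pos hε)
  filter_upwards [eventually_le_atBot Q₀] with Q hQ
  refine (hν Q f _ fun x y hxy => ?_).trans_lt (half_lt_self hε)
  exact (hQ₀ x y (DiscreteQuotient.proj_eq_proj_of_le hQ hxy)).le

end DiracConvexHull

theorem stmt16_general {X : Type*} [TopologicalSpace X] [CompactSpace X] [T2Space X]
    [TotallyDisconnectedSpace X] [MeasurableSpace X] [BorelSpace X]
    (D : Set X) (μ : ProbabilityMeasure X) :
    μ ∈ closure {ν : ProbabilityMeasure X |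
        ∃ (n : ℕ) (d : Fin n → X) (r : Fin n → ENNReal),
          (∀ j, d j ∈ D) ∧ (∑ j, r j = 1) ∧
          (ν : Measure X) = ∑ j, r j • Measure.dirac (d j)} ↔
      ∀ C : Set X, IsClopen C → 0 < (μ : Measure X) C → (C ∩ D).Nonempty := by
  refine ⟨fun hμ C hC hCμ => ?_, mem_closure_diracConvexHull⟩
  rw [nonempty_iff_ne_empty]
  exact fun hCD => hCμ.ne' (measure_eq_zero_of_mem_closure_diracConvexHull hμ hC hCD)

theorem stmt16 {X : Type*} [TopologicalSpace X] [CompactSpace X] [T2Space X]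
    [TotallyDisconnectedSpace X] [MeasurableSpace X] [BorelSpace X]
    (D : Set X) (μ : ProbabilityMeasure X) (hreg : (μ : Measure X).Regular) :
    μ ∈ closure {ν : ProbabilityMeasure X |
        ∃ (n : ℕ) (d : Fin n → X) (r : Fin n → ENNReal),
          (∀ j, d j ∈ D) ∧ (∑ j, r j = 1) ∧
          (ν : Measure X) = ∑ j, r j • Measure.dirac (d j)} ↔
      ∀ C : Set X, IsClopen C → 0 < (μ : Measure X) C → (C ∩ D).Nonempty :=
  stmt16_general D μ
end
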